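/- arXiv:1303.5876 — 9 statements merged into one kernel-verified Lean document; each statement's English description precedes it below -/
import Mathlib

section
/- For every α ∈ (0, π) with α ≠ π/2 there is exactly one time t > 0 at which the projectile trajectory (x(t), y(t)) = (v₀ cos α · t, v₀ sin α · t − (g/2)t²) meets the safety parabola, i.e. y(t) = −(g/(2v₀²))x(t)² + v₀²/(2g); moreover at that point the x-coordinate satisfies tan α = v₀²/(g·x(t)). -/
open Real

/-!
Completing the square gives the identity
`y(t) - (-(g/(2v₀²)) x(t)² + v₀²/(2g)) = -(g/2) (t sin α - v₀/g)²`,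
so the trajectory stays below the safety parabola and touches it exactly when
`t sin α = v₀/g`, which for `0 < α < π` is a single positive time. There `g x = v₀² cot α`.
-/

lemma Real.cos_ne_zero_of_mem_Ioo_of_ne_pi_div_two {α : ℝ} (hα : α ∈ Set.Ioo 0 π)
    (hα' : α ≠ π / 2) : cos α ≠ 0 := by
  intro h
  refine hα' (injOn_cos (Set.Ioo_subset_Icc_self hα) ⟨by positivity, by linarith [pi_pos]⟩ ?_)
  rw [h, cos_pi_div_two]

section Projectile

variable {v₀ g α t : ℝ}

lemma trajectory_sub_safety_parabola (hv₀ : v₀ ≠ 0) (hg : g ≠ 0) :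
    (v₀ * sin α * t - g / 2 * t ^ 2) -
        (-(g / (2 * v₀ ^ 2)) * (v₀ * cos α * t) ^ 2 + v₀ ^ 2 / (2 * g)) =
      -(g / 2) * (sin α * t - v₀ / g) ^ 2 := by
  field_simp
  linear_combination (g ^ 2 * t ^ 2) * sin_sq_add_cos_sq α

lemma trajectory_eq_safety_parabola_iff (hv₀ : v₀ ≠ 0) (hg : g ≠ 0) :
    v₀ * sin α * t - g / 2 * t ^ 2 =
        -(g / (2 * v₀ ^ 2)) * (v₀ * cos α * t) ^ 2 + v₀ ^ 2 / (2 * g) ↔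
      sin α * t = v₀ / g := by
  rw [← sub_eq_zero, trajectory_sub_safety_parabola hv₀ hg]
  simp [hg, sub_eq_zero]

lemma tan_eq_of_sin_mul_eq (hv₀ : v₀ ≠ 0) (hg : g ≠ 0) (hc : cos α ≠ 0)
    (h : sin α * t = v₀ / g) : tan α = v₀ ^ 2 / (g * (v₀ * cos α * t)) := by
  rw [eq_div_iff hg] at h
  have ht : t ≠ 0 := by
    rintro rfl
    simp [hv₀.symm] at h
  rw [tan_eq_sin_div_cos]
  field_simp
  linear_combination h

end Projectile

/-- For every launch angle `α ∈ (0, π)` with `α ≠ π/2`, there is exactly one time `t > 0` at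
which the projectile trajectory `x t = v₀ cos α · t`, `y t = v₀ sin α · t − (g/2)t²` meets the
safety parabola `y = −(g/(2v₀²)) x² + v₀²/(2g)`; moreover at that point the x-coordinate
satisfies `tan α = v₀² / (g · x t)`. -/
theorem projectile_touches_safety_parabola_once (v₀ g α : ℝ) (hv₀ : 0 < v₀) (hg : 0 < g)
    (hα : α ∈ Set.Ioo 0 π) (hα' : α ≠ π / 2)
    (x y : ℝ → ℝ)
    (hx : ∀ t, x t = v₀ * Real.cos α * t)
    (hy : ∀ t, y t = v₀ * Real.sin α * t - g / 2 * t ^ 2) :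
    (∃! t : ℝ, 0 < t ∧
        y t = -(g / (2 * v₀ ^ 2)) * (x t) ^ 2 + v₀ ^ 2 / (2 * g)) ∧
    (∀ t : ℝ, 0 < t →
        y t = -(g / (2 * v₀ ^ 2)) * (x t) ^ 2 + v₀ ^ 2 / (2 * g) →
        Real.tan α = v₀ ^ 2 / (g * x t)) := by
  have hs : 0 < sin α := sin_pos_of_pos_of_lt_pi hα.1 hα.2
  have hmeet : ∀ t, y t = -(g / (2 * v₀ ^ 2)) * (x t) ^ 2 + v₀ ^ 2 / (2 * g) ↔
      sin α * t = v₀ / g := fun t => by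
    rw [hx, hy]
    exact trajectory_eq_safety_parabola_iff hv₀.ne' hg.ne'
  simp only [hmeet]
  refine ⟨⟨v₀ / g / sin α, ⟨by positivity, by field_simp⟩, fun t ⟨_, ht⟩ => ?_⟩,
    fun t _ ht => ?_⟩
  · rw [eq_div_iff hs.ne', mul_comm, ht]
  · rw [hx]
    exact tan_eq_of_sin_mul_eq hv₀.ne' hg.ne'
      (cos_ne_zero_of_mem_Ioo_of_ne_pi_div_two hα hα') ht
end

section
/- For every angle α with cos α ≠ 0, every point P = (x(t), y(t)) of the projectile trajectory (x(t), y(t)) = (v₀ cos α · t, v₀ sin α · t − (g/2)t²) is equidistant from the point F_α = ((v₀²/(2g)) sin 2α, −(v₀²/(2g)) cos 2α) and from the horizontal line y = v₀²/(2g); moreover the distance of F_α from the origin equals v₀²/(2g), so as α varies the foci F_α all lie on the circle of radius v₀²/(2g) centered at the origin. -/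
open Real

/-! The trajectory is a parabola with vertical axis whose focal parameter is `v₀²/(2g)`:
after expanding, the identity `|P - F_α|² = (y - v₀²/(2g))²` only uses `sin²α + cos²α = 1`
together with the double-angle formulas `sin 2α = 2 sin α cos α`, `cos 2α = cos²α - sin²α`. -/

theorem trajectory_dist_sq_focus_eq_dist_sq_directrix {v g c s : ℝ} (hg : g ≠ 0)
    (hcs : s ^ 2 + c ^ 2 = 1) (t : ℝ) :
    (v * c * t - v ^ 2 / (2 * g) * (2 * s * c)) ^ 2 +
        ((v * s * t - g / 2 * t ^ 2) - -(v ^ 2 / (2 * g)) * (c ^ 2 - s ^ 2)) ^ 2 =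
      ((v * s * t - g / 2 * t ^ 2) - v ^ 2 / (2 * g)) ^ 2 := by
  field_simp
  linear_combination
    (2 * v ^ 2 * t ^ 2 * g ^ 2 - 4 * v ^ 3 * t * g * s + v ^ 4 * (s ^ 2 + c ^ 2 + 1)) * hcs

theorem sqrt_sq_mul_sin_add_sq_mul_cos (r θ : ℝ) :
    √((r * sin θ) ^ 2 + (r * cos θ) ^ 2) = |r| := by
  rw [mul_pow, mul_pow, ← mul_add, sin_sq_add_cos_sq, mul_one, sqrt_sq_eq_abs]

theorem projectile_focus_directrix_general (v₀ g α : ℝ) (hg : 0 < g)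
    (fx fy : ℝ)
    (hfx : fx = v₀ ^ 2 / (2 * g) * Real.sin (2 * α))
    (hfy : fy = -(v₀ ^ 2 / (2 * g)) * Real.cos (2 * α)) :
    (∀ t : ℝ,
        Real.sqrt ((v₀ * Real.cos α * t - fx) ^ 2 +
            ((v₀ * Real.sin α * t - g / 2 * t ^ 2) - fy) ^ 2) =
          |(v₀ * Real.sin α * t - g / 2 * t ^ 2) - v₀ ^ 2 / (2 * g)|) ∧
    Real.sqrt (fx ^ 2 + fy ^ 2) = v₀ ^ 2 / (2 * g) := by
  subst hfx hfy
  constructor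
  · intro t
    rw [sin_two_mul, cos_two_mul', ← sqrt_sq_eq_abs,
      ← trajectory_dist_sq_focus_eq_dist_sq_directrix hg.ne' (sin_sq_add_cos_sq α)]
  · rw [neg_mul, neg_sq, sqrt_sq_mul_sin_add_sq_mul_cos, abs_of_nonneg (by positivity)]

/-- For every angle `α` with `cos α ≠ 0`, every point `P = (x t, y t)` of the projectile
trajectory `x t = v₀ cos α · t`, `y t = v₀ sin α · t − (g/2)t²` is equidistant from the point
`F_α = ((v₀²/(2g)) sin 2α, −(v₀²/(2g)) cos 2α)` and from the horizontal line `y = v₀²/(2g)`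
(whose distance from `(x, y)` is `|y − v₀²/(2g)|`); moreover `F_α` lies at distance `v₀²/(2g)`
from the origin, so as `α` varies the foci lie on the circle of radius `v₀²/(2g)` centered at
the origin. -/
theorem projectile_focus_directrix (v₀ g α : ℝ) (hv₀ : 0 < v₀) (hg : 0 < g)
    (hcos : Real.cos α ≠ 0)
    (fx fy : ℝ)
    (hfx : fx = v₀ ^ 2 / (2 * g) * Real.sin (2 * α))
    (hfy : fy = -(v₀ ^ 2 / (2 * g)) * Real.cos (2 * α)) :
    (∀ t : ℝ,
        Real.sqrt ((v₀ * Real.cos α * t - fx) ^ 2 +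
            ((v₀ * Real.sin α * t - g / 2 * t ^ 2) - fy) ^ 2) =
          |(v₀ * Real.sin α * t - g / 2 * t ^ 2) - v₀ ^ 2 / (2 * g)|) ∧
    Real.sqrt (fx ^ 2 + fy ^ 2) = v₀ ^ 2 / (2 * g) :=
  projectile_focus_directrix_general v₀ g α hg fx fy hfx hfy
end

section
/- Let x₀ ≠ 0, v₀ > 0, ω > 0, p = v₀/ω. For every angle α and every t, the point (x(t), y(t)) = (x₀ cos(ωt) + p cos α sin(ωt), p sin α sin(ωt)) satisfies x(t)²/(x₀² + p²) + y(t)²/p² ≤ 1; that is, every orbit lies inside or on the ellipse of safety x²/(x₀² + p²) + y²/p² = 1. -/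
open Real

/-! By Cauchy–Schwarz, `(x₀ cos θ + p · cos α sin θ)² ≤ (x₀² + p²)(cos² θ + cos² α sin² θ)`,
and the last factor is `1 - sin² α sin² θ = 1 - y²/p²`. -/

theorem mul_add_mul_sq_le_sq_add_sq_mul_sq_add_sq (a b x y : ℝ) :
    (a * x + b * y) ^ 2 ≤ (a ^ 2 + b ^ 2) * (x ^ 2 + y ^ 2) := by
  nlinarith [sq_nonneg (a * y - b * x)]

theorem harmonic_orbit_inside_safety_ellipse (a p α θ : ℝ) (hp : p ≠ 0) :
    (a * cos θ + p * cos α * sin θ) ^ 2 / (a ^ 2 + p ^ 2) +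
      (p * sin α * sin θ) ^ 2 / p ^ 2 ≤ 1 := by
  have hsum : 0 < a ^ 2 + p ^ 2 := by positivity
  have hy : (p * sin α * sin θ) ^ 2 / p ^ 2 = (sin α * sin θ) ^ 2 := by
    field_simp
  have hx : (a * cos θ + p * cos α * sin θ) ^ 2 ≤
      (a ^ 2 + p ^ 2) * (1 - (sin α * sin θ) ^ 2) := by
    calc (a * cos θ + p * cos α * sin θ) ^ 2
        = (a * cos θ + p * (cos α * sin θ)) ^ 2 := by ring
      _ ≤ (a ^ 2 + p ^ 2) * (cos θ ^ 2 + (cos α * sin θ) ^ 2) :=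
        mul_add_mul_sq_le_sq_add_sq_mul_sq_add_sq _ _ _ _
      _ = (a ^ 2 + p ^ 2) * (1 - (sin α * sin θ) ^ 2) := by
        linear_combination
          (a ^ 2 + p ^ 2) * (sin θ ^ 2 * sin_sq_add_cos_sq α + sin_sq_add_cos_sq θ)
  rw [hy, ← le_sub_iff_add_le, div_le_iff₀ hsum]
  linarith

theorem oscillator_inside_safety_ellipse_general (x₀ v₀ ω p : ℝ) (hv₀ : 0 < v₀)
    (hω : 0 < ω) (hp : p = v₀ / ω) :
    ∀ α t : ℝ,
      (x₀ * Real.cos (ω * t) + p * Real.cos α * Real.sin (ω * t)) ^ 2 / (x₀ ^ 2 + p ^ 2) +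
        (p * Real.sin α * Real.sin (ω * t)) ^ 2 / p ^ 2 ≤ 1 := by
  have hp₀ : p ≠ 0 := by
    rw [hp]
    positivity
  intro α t
  exact harmonic_orbit_inside_safety_ellipse x₀ p α (ω * t) hp₀

/-- A two-dimensional free harmonic oscillator with frequency `ω > 0`, initial position
`(x₀, 0)` (with `x₀ ≠ 0`), speed `v₀ > 0` and any launch angle `α`, moving along
`x t = x₀ cos (ωt) + p cos α sin (ωt)`, `y t = p sin α sin (ωt)` where `p = v₀/ω`, stays
inside or on the ellipse of safety `x²/(x₀² + p²) + y²/p² = 1`. -/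
theorem oscillator_inside_safety_ellipse (x₀ v₀ ω p : ℝ) (hx₀ : x₀ ≠ 0) (hv₀ : 0 < v₀)
    (hω : 0 < ω) (hp : p = v₀ / ω) :
    ∀ α t : ℝ,
      (x₀ * Real.cos (ω * t) + p * Real.cos α * Real.sin (ω * t)) ^ 2 / (x₀ ^ 2 + p ^ 2) +
        (p * Real.sin α * Real.sin (ω * t)) ^ 2 / p ^ 2 ≤ 1 :=
  oscillator_inside_safety_ellipse_general x₀ v₀ ω p hv₀ hω hp
end

section
/- Let x₀ ≠ 0, v₀ > 0, ω > 0, p = v₀/ω. For every α ∈ (0, π) there exists a time t at which the orbit point (x(t), y(t)) = (x₀ cos(ωt) + p cos α sin(ωt), p sin α sin(ωt)) lies on the ellipse of safety, i.e. x(t)²/(x₀² + p²) + y(t)²/p² = 1. -/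
/-!
Measured against the safety ellipse, the orbit point at phase `θ = ωt` has defect
`(p cos θ - x₀ cos α sin θ)² / (x₀² + p²)`: the orbit stays inside the ellipse and touches it
exactly at the phases where `p cos θ = x₀ cos α sin θ`. Such a phase always exists, namely the
argument of `x₀ cos α + i p`.
-/

open Real

theorem exists_mul_cos_eq_mul_sin (a b : ℝ) : ∃ θ : ℝ, a * cos θ = b * sin θ := by
  let z : ℂ := ⟨b, a⟩
  refine ⟨z.arg, ?_⟩
  have hre : ‖z‖ * cos z.arg = b := Complex.norm_mul_cos_arg z
  have him : ‖z‖ * sin z.arg = a := Complex.norm_mul_sin_arg z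
  linear_combination sin z.arg * hre - cos z.arg * him

theorem orbit_safety_ellipse_eq_one_sub_sq (x₀ p α θ : ℝ) (hp : p ≠ 0) :
    (x₀ * cos θ + p * cos α * sin θ) ^ 2 / (x₀ ^ 2 + p ^ 2) + (p * sin α * sin θ) ^ 2 / p ^ 2 =
      1 - (p * cos θ - x₀ * cos α * sin θ) ^ 2 / (x₀ ^ 2 + p ^ 2) := by
  have hsum : x₀ ^ 2 + p ^ 2 ≠ 0 := by positivity
  field_simp
  linear_combination (x₀ ^ 2 + p ^ 2) * (sin θ ^ 2 * sin_sq_add_cos_sq α + sin_sq_add_cos_sq θ)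

theorem oscillator_touches_safety_ellipse_general (x₀ v₀ ω p : ℝ) (hv₀ : 0 < v₀)
    (hω : 0 < ω) (hp : p = v₀ / ω) :
    ∀ α ∈ Set.Ioo 0 π, ∃ t : ℝ,
      (x₀ * Real.cos (ω * t) + p * Real.cos α * Real.sin (ω * t)) ^ 2 / (x₀ ^ 2 + p ^ 2) +
        (p * Real.sin α * Real.sin (ω * t)) ^ 2 / p ^ 2 = 1 := by
  intro α _
  have hp₀ : p ≠ 0 := by rw [hp]; positivity
  obtain ⟨θ, hθ⟩ := exists_mul_cos_eq_mul_sin p (x₀ * cos α)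
  refine ⟨θ / ω, ?_⟩
  rw [mul_div_cancel₀ θ hω.ne', orbit_safety_ellipse_eq_one_sub_sq x₀ p α θ hp₀, hθ,
    sub_self]
  simp

/-- A two-dimensional free harmonic oscillator with frequency `ω > 0`, initial position
`(x₀, 0)` (with `x₀ ≠ 0`), speed `v₀ > 0` and launch angle `α ∈ (0, π)`, moving along
`x t = x₀ cos (ωt) + p cos α sin (ωt)`, `y t = p sin α sin (ωt)` where `p = v₀/ω`, touches
the ellipse of safety `x²/(x₀² + p²) + y²/p² = 1` at some time `t`. -/
theorem oscillator_touches_safety_ellipse (x₀ v₀ ω p : ℝ) (hx₀ : x₀ ≠ 0) (hv₀ : 0 < v₀)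
    (hω : 0 < ω) (hp : p = v₀ / ω) :
    ∀ α ∈ Set.Ioo 0 π, ∃ t : ℝ,
      (x₀ * Real.cos (ω * t) + p * Real.cos α * Real.sin (ω * t)) ^ 2 / (x₀ ^ 2 + p ^ 2) +
        (p * Real.sin α * Real.sin (ω * t)) ^ 2 / p ^ 2 = 1 :=
  oscillator_touches_safety_ellipse_general x₀ v₀ ω p hv₀ hω hp
end

section
/- Fix x₀ ≠ 0, p > 0 and a point (x, y) with y ≠ 0. The quadratic equation y²(p² + x₀²)·u² − 2xy p²·u + (x² − x₀²)p² + x₀² y² = 0 in the unknown u = cot α has exactly one real solution if and only if x²/(x₀² + p²) + y²/p² = 1, i.e. if and only if (x, y) lies on the ellipse of safety. -/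
open Real

/-!
A real quadratic with nonzero leading coefficient has exactly one root iff its discriminant
vanishes, and the discriminant of the `cot α`-quadratic is `-4 x₀² y²` times the equation of the
ellipse of safety with its denominators cleared.
-/

theorem div_add_div_eq_one_iff {K : Type*} [Field K] {a b c d : K} (hb : b ≠ 0) (hd : d ≠ 0) :
    a / b + c / d = 1 ↔ a * d + b * c = b * d := by
  rw [div_add_div _ _ hb hd, div_eq_one_iff_eq (mul_ne_zero hb hd)]

theorem discrim_safety_quadratic {R : Type*} [CommRing R] (x₀ p x y : R) :
    discrim (y ^ 2 * (p ^ 2 + x₀ ^ 2)) (-(2 * x * y * p ^ 2))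
        ((x ^ 2 - x₀ ^ 2) * p ^ 2 + x₀ ^ 2 * y ^ 2) =
      -4 * x₀ ^ 2 * y ^ 2 *
        (x ^ 2 * p ^ 2 + (x₀ ^ 2 + p ^ 2) * y ^ 2 - (x₀ ^ 2 + p ^ 2) * p ^ 2) := by
  rw [discrim]
  ring

/-- Fix `x₀ ≠ 0`, `p > 0` and a point `(x, y)` with `y ≠ 0`.  The quadratic equation
`y²(p² + x₀²) u² − 2xy p² u + (x² − x₀²) p² + x₀² y² = 0` in the unknown `u = cot α` has
exactly one real solution if and only if `x²/(x₀² + p²) + y²/p² = 1`, i.e. iff `(x, y)` lies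
on the ellipse of safety. -/
theorem safety_ellipse_unique_solution (x₀ p x y : ℝ) (hx₀ : x₀ ≠ 0) (hp : 0 < p)
    (hy : y ≠ 0) :
    (∃! u : ℝ,
        y ^ 2 * (p ^ 2 + x₀ ^ 2) * u ^ 2 - 2 * x * y * p ^ 2 * u +
          (x ^ 2 - x₀ ^ 2) * p ^ 2 + x₀ ^ 2 * y ^ 2 = 0)
      ↔ x ^ 2 / (x₀ ^ 2 + p ^ 2) + y ^ 2 / p ^ 2 = 1 := by
  have hp₀ : p ≠ 0 := hp.ne'
  have hlead : y ^ 2 * (p ^ 2 + x₀ ^ 2) ≠ 0 := by positivity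
  have hquad : ∀ u : ℝ,
      y ^ 2 * (p ^ 2 + x₀ ^ 2) * u ^ 2 - 2 * x * y * p ^ 2 * u +
          (x ^ 2 - x₀ ^ 2) * p ^ 2 + x₀ ^ 2 * y ^ 2 =
        y ^ 2 * (p ^ 2 + x₀ ^ 2) * (u * u) + -(2 * x * y * p ^ 2) * u +
          ((x ^ 2 - x₀ ^ 2) * p ^ 2 + x₀ ^ 2 * y ^ 2) := fun u => by ring
  simp only [hquad]
  rw [← discrim_eq_zero_iff hlead, discrim_safety_quadratic, mul_eq_zero,
    or_iff_right (by positivity), sub_eq_zero,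
    div_add_div_eq_one_iff (by positivity) (by positivity)]
end

section
/- Let x₀ > 0, v₀ > 0 and α with sin α ≠ 0, and let P_α(t) = (x₀ cos t + v₀ cos α sin t, v₀ sin α sin t). Suppose F ∈ ℝ² and a > 0 are such that for every t, dist(P_α(t), F) + dist(P_α(t), −F) = 2a (so F and −F are the foci of the elliptical orbit). Then dist(F, (−x₀, 0)) · dist(F, (x₀, 0)) = v₀²; that is, writing F = (x, y), the focus satisfies the Cassini oval equation ((x + x₀)² + y²)((x − x₀)² + y²) = v₀⁴. -/
/-!
At a point `z` of the ellipse with foci `±F` and major semi-axis `a`, squaring the focal relation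
with the parallelogram law gives `‖z - F‖ ‖z + F‖ = 2a² - ‖z‖² - ‖F‖²` and
`⟪z, F⟫² = a² (‖z‖² + ‖F‖² - a²)`. Along the orbit `cos t • u + sin t • w`, the values
`t = 0, π/2, π/4` show that `u` and `w` are conjugate semi-diameters. Since the Gram determinant of
`u, w, F` vanishes in the plane, this gives Apollonius' theorem `‖u‖² + ‖w‖² = 2a² - ‖F‖²`, so the
focal product at `u = (x₀, 0)` is `‖w‖² = v₀²`.
-/

open Real
open scoped RealInnerProductSpace

/-- A point of the Euclidean plane with coordinates `a`, `b`. -/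
noncomputable def pt (a b : ℝ) : EuclideanSpace ℝ (Fin 2) := WithLp.toLp 2 ![a, b]

section Ellipse

variable {E : Type*} [NormedAddCommGroup E] [InnerProductSpace ℝ E]

def ellipse (F : E) (a : ℝ) : Set E := {z | ‖z - F‖ + ‖z + F‖ = 2 * a}

variable {F z : E} {a : ℝ}

theorem norm_sub_mul_norm_add_of_mem_ellipse (hz : z ∈ ellipse F a) :
    ‖z - F‖ * ‖z + F‖ = 2 * a ^ 2 - ‖z‖ ^ 2 - ‖F‖ ^ 2 := by
  have hsum : ‖z - F‖ + ‖z + F‖ = 2 * a := hz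
  have hsub := norm_sub_sq_real z F
  have hadd := norm_add_sq_real z F
  linear_combination (‖z - F‖ + ‖z + F‖ + 2 * a) / 2 * hsum - hsub / 2 - hadd / 2

theorem inner_sq_of_mem_ellipse (hz : z ∈ ellipse F a) :
    ⟪z, F⟫ ^ 2 = a ^ 2 * (‖z‖ ^ 2 + ‖F‖ ^ 2 - a ^ 2) := by
  have hprod := norm_sub_mul_norm_add_of_mem_ellipse hz
  have hsub := norm_sub_sq_real z F
  have hadd := norm_add_sq_real z F
  linear_combination (‖z + F‖ ^ 2 * hsub + (‖z‖ ^ 2 - 2 * ⟪z, F⟫ + ‖F‖ ^ 2) * hadd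
    - (‖z - F‖ * ‖z + F‖ + 2 * a ^ 2 - ‖z‖ ^ 2 - ‖F‖ ^ 2) * hprod) / 4

variable {u w : E}

theorem inner_mul_inner_of_forall_mem_ellipse
    (h : ∀ t : ℝ, cos t • u + sin t • w ∈ ellipse F a) :
    ⟪u, F⟫ * ⟪w, F⟫ = a ^ 2 * ⟪u, w⟫ := by
  have hu := inner_sq_of_mem_ellipse (by simpa using h 0)
  have hw := inner_sq_of_mem_ellipse (by simpa using h (π / 2))
  have huw := inner_sq_of_mem_ellipse (h (π / 4))
  have hs : √2 ^ 2 = 2 := sq_sqrt zero_le_two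
  rw [cos_pi_div_four, sin_pi_div_four, ← smul_add, real_inner_smul_left, norm_smul, mul_pow,
    mul_pow, norm_add_sq_real, inner_add_left, Real.norm_eq_abs, sq_abs, div_pow, hs] at huw
  linear_combination huw - hu / 2 - hw / 2

end Ellipse

-- The Gram determinant of three vectors in the plane vanishes.
theorem inner_gram_eq_fin_two (u w F : EuclideanSpace ℝ (Fin 2)) :
    ⟪u, F⟫ ^ 2 * ‖w‖ ^ 2 - 2 * ⟪u, F⟫ * ⟪w, F⟫ * ⟪u, w⟫ + ⟪w, F⟫ ^ 2 * ‖u‖ ^ 2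
      = ‖F‖ ^ 2 * (‖u‖ ^ 2 * ‖w‖ ^ 2 - ⟪u, w⟫ ^ 2) := by
  simp only [EuclideanSpace.norm_sq_eq, EuclideanSpace.inner_eq_star_dotProduct, dotProduct,
    Pi.star_apply, star_trivial, Fin.sum_univ_two, norm_eq_abs, sq_abs]
  ring

section Apollonius

variable {u w F : EuclideanSpace ℝ (Fin 2)} {a : ℝ}

theorem norm_sq_add_norm_sq_of_forall_mem_ellipse (ha : a ≠ 0)
    (huw : ⟪u, w⟫ ^ 2 ≠ ‖u‖ ^ 2 * ‖w‖ ^ 2)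
    (h : ∀ t : ℝ, cos t • u + sin t • w ∈ ellipse F a) :
    ‖u‖ ^ 2 + ‖w‖ ^ 2 = 2 * a ^ 2 - ‖F‖ ^ 2 := by
  have hu := inner_sq_of_mem_ellipse (by simpa using h 0)
  have hw := inner_sq_of_mem_ellipse (by simpa using h (π / 2))
  have hconj := inner_mul_inner_of_forall_mem_ellipse h
  have hgram := inner_gram_eq_fin_two u w F
  set G := ‖u‖ ^ 2 * ‖w‖ ^ 2 - ⟪u, w⟫ ^ 2
  set d := a ^ 2 - ‖F‖ ^ 2
  have hG0 : G ≠ 0 := sub_ne_zero.2 (Ne.symm huw)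
  have h1 : (a ^ 2 + d) * G = a ^ 2 * d * (‖u‖ ^ 2 + ‖w‖ ^ 2) := by
    linear_combination hgram - ‖w‖ ^ 2 * hu - ‖u‖ ^ 2 * hw + 2 * ⟪u, w⟫ * hconj
  have h2 : G = d * (‖u‖ ^ 2 + ‖w‖ ^ 2) - d ^ 2 := by
    have ha4 : a ^ 4 ≠ 0 := pow_ne_zero 4 ha
    refine mul_left_cancel₀ ha4 ?_
    linear_combination (⟪u, F⟫ * ⟪w, F⟫ + a ^ 2 * ⟪u, w⟫) * hconj - ⟪w, F⟫ ^ 2 * hu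
      - a ^ 2 * (‖u‖ ^ 2 + ‖F‖ ^ 2 - a ^ 2) * hw
  -- `d` is the squared minor semi-axis; `d = 0` would flatten the orbit into a segment.
  have hd0 : d ≠ 0 := by
    intro hd0
    exact hG0 (by simpa [hd0] using h2)
  have hGd : G = a ^ 2 * d := by
    refine mul_left_cancel₀ hd0 ?_
    linear_combination h1 - a ^ 2 * h2
  refine mul_left_cancel₀ hd0 ?_
  linear_combination hGd - h2

theorem norm_sub_mul_norm_add_of_forall_mem_ellipse (ha : a ≠ 0)
    (huw : ⟪u, w⟫ ^ 2 ≠ ‖u‖ ^ 2 * ‖w‖ ^ 2)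
    (h : ∀ t : ℝ, cos t • u + sin t • w ∈ ellipse F a) :
    ‖u - F‖ * ‖u + F‖ = ‖w‖ ^ 2 := by
  have hprod := norm_sub_mul_norm_add_of_mem_ellipse (by simpa using h 0)
  have hsum := norm_sq_add_norm_sq_of_forall_mem_ellipse ha huw h
  linear_combination hprod - hsum

end Apollonius

theorem smul_pt_add_smul_pt (c s a b a' b' : ℝ) :
    c • pt a b + s • pt a' b' = pt (c * a + s * a') (c * b + s * b') := by
  ext i; fin_cases i <;> simp [pt]

theorem neg_pt (a b : ℝ) : -pt a b = pt (-a) (-b) := by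
  ext i; fin_cases i <;> simp [pt]

theorem norm_sq_pt (a b : ℝ) : ‖pt a b‖ ^ 2 = a ^ 2 + b ^ 2 := by
  simp [EuclideanSpace.norm_sq_eq, pt, Fin.sum_univ_two]

theorem inner_pt_pt (a b c d : ℝ) : ⟪pt a b, pt c d⟫ = a * c + b * d := by
  simp only [pt, EuclideanSpace.inner_eq_star_dotProduct, dotProduct, Pi.star_apply, star_trivial,
    Fin.sum_univ_two, Matrix.cons_val_zero, Matrix.cons_val_one, Matrix.cons_val_fin_one]
  ring

theorem dist_pt_sq (F : EuclideanSpace ℝ (Fin 2)) (p q : ℝ) :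
    dist F (pt p q) ^ 2 = (F 0 - p) ^ 2 + (F 1 - q) ^ 2 := by
  rw [EuclideanSpace.dist_eq, sq_sqrt (by positivity)]
  simp [pt, Fin.sum_univ_two, Real.dist_eq]

/-- A two-dimensional free harmonic oscillator with frequency `ω = 1`, initial position
`(x₀, 0)` (with `x₀ > 0`), speed `v₀ > 0` and launch angle `α` with `sin α ≠ 0` moves along
the elliptical orbit `P_α(t) = (x₀ cos t + v₀ cos α sin t, v₀ sin α sin t)`.  If `F` and `−F`
are the foci of this orbit, that is, `dist (P_α t) F + dist (P_α t) (−F) = 2a` for every `t`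
and some `a > 0`, then the product of the distances from `F` to `(−x₀, 0)` and `(x₀, 0)` is
`v₀²`; writing `F = (x, y)`, the focus satisfies the Cassini oval equation
`((x + x₀)² + y²)((x − x₀)² + y²) = v₀⁴`. -/
theorem oscillator_foci_on_cassini_oval (x₀ v₀ α : ℝ) (hx₀ : 0 < x₀) (hv₀ : 0 < v₀)
    (hsin : Real.sin α ≠ 0)
    (P : ℝ → EuclideanSpace ℝ (Fin 2))
    (hP : ∀ t, P t = pt (x₀ * Real.cos t + v₀ * Real.cos α * Real.sin t)
                       (v₀ * Real.sin α * Real.sin t))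
    (F : EuclideanSpace ℝ (Fin 2)) (a : ℝ) (ha : 0 < a)
    (hfoci : ∀ t, dist (P t) F + dist (P t) (-F) = 2 * a) :
    dist F (pt (-x₀) 0) * dist F (pt x₀ 0) = v₀ ^ 2 ∧
    ((F 0 + x₀) ^ 2 + (F 1) ^ 2) * ((F 0 - x₀) ^ 2 + (F 1) ^ 2) = v₀ ^ 4 := by
  set u := pt x₀ 0
  set w := pt (v₀ * cos α) (v₀ * sin α)
  have horbit (t : ℝ) : cos t • u + sin t • w ∈ ellipse F a := by
    have hPt : P t = cos t • u + sin t • w := by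
      rw [hP, smul_pt_add_smul_pt]; congr 1 <;> ring
    have h := hfoci t
    rwa [hPt, dist_eq_norm, dist_eq_norm, sub_neg_eq_add] at h
  have hw : ‖w‖ ^ 2 = v₀ ^ 2 := by
    rw [norm_sq_pt]; linear_combination v₀ ^ 2 * sin_sq_add_cos_sq α
  have huw : ⟪u, w⟫ ^ 2 ≠ ‖u‖ ^ 2 * ‖w‖ ^ 2 := by
    have harea : x₀ ^ 2 * v₀ ^ 2 * sin α ^ 2 ≠ 0 :=
      mul_ne_zero (by positivity) (pow_ne_zero 2 hsin)
    rw [hw, norm_sq_pt, inner_pt_pt]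
    intro h
    exact harea (by linear_combination x₀ ^ 2 * v₀ ^ 2 * sin_sq_add_cos_sq α - h)
  have hneg : pt (-x₀) 0 = -u := by rw [neg_pt, neg_zero]
  have hfocal : dist F (pt (-x₀) 0) * dist F (pt x₀ 0) = v₀ ^ 2 :=
    calc dist F (pt (-x₀) 0) * dist F (pt x₀ 0) = ‖u - F‖ * ‖u + F‖ := by
          rw [hneg, dist_eq_norm, dist_eq_norm, sub_neg_eq_add, add_comm F,
            norm_sub_rev F, mul_comm]
      _ = v₀ ^ 2 := by rw [norm_sub_mul_norm_add_of_forall_mem_ellipse ha.ne' huw horbit, hw]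
  refine ⟨hfocal, ?_⟩
  calc ((F 0 + x₀) ^ 2 + (F 1) ^ 2) * ((F 0 - x₀) ^ 2 + (F 1) ^ 2)
      = (dist F (pt (-x₀) 0) * dist F (pt x₀ 0)) ^ 2 := by
        rw [mul_pow, dist_pt_sq, dist_pt_sq]; ring
    _ = v₀ ^ 4 := by rw [hfocal]; ring
end

section
/- Let x₀ > 0, v₀ > 0 and α be arbitrary, and let P_α(t) = (x₀ cos t + v₀ cos α sin t, v₀ sin α sin t). Then the supremum over t of |P_α(t)|² plus the infimum over t of |P_α(t)|² equals x₀² + v₀²; i.e., the semi-axes a, b of the orbit satisfy a² + b² = x₀² + v₀². -/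
open Real

/-! Expanding with the double-angle formulas, `|P_α(t)|² = m + d cos 2t + b sin 2t` with
`m = (x₀² + v₀²)/2`, and a harmonic `d cos s + b sin s = r cos (s - φ)` ranges exactly over
`[-r, r]`. So `|P_α|²` ranges over `[m - r, m + r]`, and its supremum and infimum sum to `2m`. -/

theorem Complex.re_mul_cos_add_im_mul_sin (z : ℂ) (t : ℝ) :
    z.re * Real.cos t + z.im * Real.sin t = ‖z‖ * Real.cos (t - z.arg) := by
  rw [Real.cos_sub, ← Complex.norm_mul_cos_arg, ← Complex.norm_mul_sin_arg]
  ring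

theorem range_mul_cos_add_mul_sin (a b : ℝ) :
    Set.range (fun t => a * cos t + b * sin t) =
      Set.Icc (-√(a ^ 2 + b ^ 2)) √(a ^ 2 + b ^ 2) := by
  set z : ℂ := ⟨a, b⟩
  have hshift : (fun t => a * cos t + b * sin t) =
      (fun x => ‖z‖ * x) ∘ cos ∘ Equiv.subRight z.arg :=
    funext fun t => Complex.re_mul_cos_add_im_mul_sin z t
  rw [hshift, Set.range_comp, (Equiv.subRight z.arg).surjective.range_comp, range_cos,
    Set.image_mul_left_Icc (norm_nonneg z) (by norm_num), Complex.norm_eq_sqrt_sq_add_sq]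
  simp [z]

theorem range_mul_cos_mul_add_mul_sin_mul {ω : ℝ} (hω : ω ≠ 0) (a b : ℝ) :
    Set.range (fun t => a * cos (ω * t) + b * sin (ω * t)) =
      Set.Icc (-√(a ^ 2 + b ^ 2)) √(a ^ 2 + b ^ 2) :=
  ((Equiv.mulLeft₀ ω hω).surjective.range_comp (fun s => a * cos s + b * sin s)).trans
    (range_mul_cos_add_mul_sin a b)

theorem oscillator_normSq_eq (x₀ v₀ α t : ℝ) :
    (x₀ * cos t + v₀ * cos α * sin t) ^ 2 + (v₀ * sin α * sin t) ^ 2 =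
      (x₀ ^ 2 + v₀ ^ 2) / 2 +
        ((x₀ ^ 2 - v₀ ^ 2) / 2 * cos (2 * t) + x₀ * v₀ * cos α * sin (2 * t)) := by
  rw [cos_two_mul, sin_two_mul]
  linear_combination (v₀ ^ 2 * sin t ^ 2) * sin_sq_add_cos_sq α +
    v₀ ^ 2 * sin_sq_add_cos_sq t

theorem iSup_add_iInf_of_range_eq_Icc {ι : Sort*} {α : Type*} [ConditionallyCompleteLattice α]
    [Add α] {f : ι → α} {a b : α} (hab : a ≤ b)
    (hf : Set.range f = Set.Icc a b) : (⨆ i, f i) + (⨅ i, f i) = b + a := by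
  rw [iSup, iInf, hf, csSup_Icc hab, csInf_Icc hab]

theorem oscillator_sum_of_squared_semiaxes_general (x₀ v₀ α : ℝ) :
    (⨆ t : ℝ, ((x₀ * Real.cos t + v₀ * Real.cos α * Real.sin t) ^ 2 +
        (v₀ * Real.sin α * Real.sin t) ^ 2)) +
      (⨅ t : ℝ, ((x₀ * Real.cos t + v₀ * Real.cos α * Real.sin t) ^ 2 +
        (v₀ * Real.sin α * Real.sin t) ^ 2)) = x₀ ^ 2 + v₀ ^ 2 := by
  set m := (x₀ ^ 2 + v₀ ^ 2) / 2
  set r := √(((x₀ ^ 2 - v₀ ^ 2) / 2) ^ 2 + (x₀ * v₀ * cos α) ^ 2)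
  have hrange : Set.range (fun t => (x₀ * cos t + v₀ * cos α * sin t) ^ 2 +
      (v₀ * sin α * sin t) ^ 2) = Set.Icc (m - r) (m + r) := by
    simp_rw [oscillator_normSq_eq]
    rw [← Function.comp_def (m + ·), Set.range_comp,
      range_mul_cos_mul_add_mul_sin_mul two_ne_zero, Set.image_const_add_Icc, ← sub_eq_add_neg]
  have hr : m - r ≤ m + r := by linarith [show 0 ≤ r from sqrt_nonneg _]
  rw [iSup_add_iInf_of_range_eq_Icc hr hrange]
  ring

/-- A two-dimensional free harmonic oscillator with frequency `ω = 1`, initial position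
`(x₀, 0)` (with `x₀ > 0`), speed `v₀ > 0` and arbitrary launch angle `α` moves along the
elliptical orbit `P_α(t) = (x₀ cos t + v₀ cos α sin t, v₀ sin α sin t)`.  The supremum over
`t` of `|P_α(t)|²` plus the infimum over `t` of `|P_α(t)|²` equals `x₀² + v₀²`; i.e. the
semi-axes `a`, `b` of the orbit satisfy `a² + b² = x₀² + v₀²`. -/
theorem oscillator_sum_of_squared_semiaxes (x₀ v₀ α : ℝ) (hx₀ : 0 < x₀) (hv₀ : 0 < v₀) :
    (⨆ t : ℝ, ((x₀ * Real.cos t + v₀ * Real.cos α * Real.sin t) ^ 2 +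
        (v₀ * Real.sin α * Real.sin t) ^ 2)) +
      (⨅ t : ℝ, ((x₀ * Real.cos t + v₀ * Real.cos α * Real.sin t) ^ 2 +
        (v₀ * Real.sin α * Real.sin t) ^ 2)) = x₀ ^ 2 + v₀ ^ 2 :=
  oscillator_sum_of_squared_semiaxes_general x₀ v₀ α
end

section
/- Let x₀ > 0 and α with sin α ≠ 0, and let P_α(t) = (x₀ cos t + x₀ cos α sin t, x₀ sin α sin t) (the case v₀ = x₀). Suppose F ∈ ℝ² and a > 0 satisfy dist(P_α(t), F) + dist(P_α(t), −F) = 2a for every t. Then F = (x, y) lies on the lemniscate of Bernoulli (x² + y²)² = 2x₀²(x² − y²). -/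
open Real

/-!
The focal property at a point `p` squares away to `a² (‖p‖² + ‖F‖² - a²) = ⟪p, F⟫²`. Along
the orbit `p = cos t • A + sin t • B` both sides are quadratic forms in `(cos t, sin t)`, so their
three coefficients agree. Conjugated by the adjugate of the matrix with columns `A`, `B`, these
relations say `A Aᵀ + B Bᵀ = F Fᵀ + (a² - ‖F‖²) I`, i.e. `F² = A² + B²` in complex notation.
For `A = x₀`, `B = x₀ e^{iα}` this puts `F²` on the circle `|w - x₀²| = x₀²`, whose preimage
under squaring is the lemniscate.
-/

open RealInnerProductSpace

theorem sq_inner_eq_of_dist_add_dist_neg_eq {E : Type*} [NormedAddCommGroup E]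
    [InnerProductSpace ℝ E] {p F : E} {a : ℝ} (h : dist p F + dist p (-F) = 2 * a) :
    a ^ 2 * (‖p‖ ^ 2 + ‖F‖ ^ 2 - a ^ 2) = ⟪p, F⟫ ^ 2 := by
  have hd : dist p F ^ 2 = ‖p‖ ^ 2 - 2 * ⟪p, F⟫ + ‖F‖ ^ 2 := by
    rw [dist_eq_norm, norm_sub_sq_real]
  have he : dist p (-F) ^ 2 = ‖p‖ ^ 2 + 2 * ⟪p, F⟫ + ‖F‖ ^ 2 := by
    rw [dist_eq_norm, sub_neg_eq_add, norm_add_sq_real]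
  have had : a * dist p F = a ^ 2 - ⟪p, F⟫ := by
    rw [show dist p (-F) = 2 * a - dist p F by linarith] at he
    linear_combination (hd - he) / 4
  linear_combination -(a ^ 2 * hd) + (a * dist p F + a ^ 2 - ⟪p, F⟫) * had

theorem inner_relations_of_dist_add_dist_neg_eq {E : Type*} [NormedAddCommGroup E]
    [InnerProductSpace ℝ E] {A B F : E} {a : ℝ}
    (h : ∀ t : ℝ, dist (cos t • A + sin t • B) F + dist (cos t • A + sin t • B) (-F) = 2 * a) :
    a ^ 2 * (‖A‖ ^ 2 + ‖F‖ ^ 2 - a ^ 2) = ⟪A, F⟫ ^ 2 ∧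
      a ^ 2 * (‖B‖ ^ 2 + ‖F‖ ^ 2 - a ^ 2) = ⟪B, F⟫ ^ 2 ∧
      a ^ 2 * ⟪A, B⟫ = ⟪A, F⟫ * ⟪B, F⟫ := by
  have key : ∀ t, cos t ^ 2 * (a ^ 2 * (‖A‖ ^ 2 + ‖F‖ ^ 2 - a ^ 2) - ⟪A, F⟫ ^ 2)
      + 2 * (cos t * sin t) * (a ^ 2 * ⟪A, B⟫ - ⟪A, F⟫ * ⟪B, F⟫)
      + sin t ^ 2 * (a ^ 2 * (‖B‖ ^ 2 + ‖F‖ ^ 2 - a ^ 2) - ⟪B, F⟫ ^ 2) = 0 := by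
    intro t
    have ht := sq_inner_eq_of_dist_add_dist_neg_eq (h t)
    rw [norm_add_sq_real, norm_smul, norm_smul, inner_add_left, real_inner_smul_left,
      real_inner_smul_left, real_inner_smul_right, real_inner_smul_left, Real.norm_eq_abs,
      Real.norm_eq_abs, mul_pow, mul_pow, sq_abs, sq_abs] at ht
    linear_combination ht + a ^ 2 * (‖F‖ ^ 2 - a ^ 2) * sin_sq_add_cos_sq t
  have h0 := key 0
  have h1 := key (π / 2)
  have h2 := key (π / 4)
  simp only [cos_zero, sin_zero, cos_pi_div_two, sin_pi_div_two, cos_pi_div_four,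
    sin_pi_div_four] at h0 h1 h2
  have hr : (√2 / 2) ^ 2 = 1 / 2 := by rw [div_pow, sq_sqrt zero_le_two]; norm_num
  rw [← sq, hr] at h2
  exact ⟨by linear_combination h0, by linear_combination h1,
    by linear_combination h2 - h0 / 2 - h1 / 2⟩

theorem focus_sq_eq_add_sq_of_inner_relations {A B F : EuclideanSpace ℝ (Fin 2)} {a : ℝ}
    (ha : a ≠ 0) (hdet : A 0 * B 1 - A 1 * B 0 ≠ 0)
    (hA : a ^ 2 * (‖A‖ ^ 2 + ‖F‖ ^ 2 - a ^ 2) = ⟪A, F⟫ ^ 2)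
    (hB : a ^ 2 * (‖B‖ ^ 2 + ‖F‖ ^ 2 - a ^ 2) = ⟪B, F⟫ ^ 2)
    (hAB : a ^ 2 * ⟪A, B⟫ = ⟪A, F⟫ * ⟪B, F⟫) :
    F 0 ^ 2 - F 1 ^ 2 = A 0 ^ 2 - A 1 ^ 2 + (B 0 ^ 2 - B 1 ^ 2) ∧
      F 0 * F 1 = A 0 * A 1 + B 0 * B 1 := by
  simp only [← real_inner_self_eq_norm_sq, PiLp.inner_apply, Fin.sum_univ_two,
    RCLike.inner_apply, conj_trivial] at hA hB hAB
  set D := A 0 * B 1 - A 1 * B 0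
  set c := a ^ 2
  set l := F 0 ^ 2 + F 1 ^ 2 - c
  have hc : c ≠ 0 := pow_ne_zero 2 ha
  have hD : D ^ 2 ≠ 0 := pow_ne_zero 2 hdet
  -- the entries of `c (D² I + l adj (A Aᵀ + B Bᵀ)) = D² F Fᵀ`
  have h00 : c * (D ^ 2 + l * (A 1 ^ 2 + B 1 ^ 2)) = D ^ 2 * F 0 ^ 2 := by
    linear_combination B 1 ^ 2 * hA + A 1 ^ 2 * hB - 2 * A 1 * B 1 * hAB
  have h11 : c * (D ^ 2 + l * (A 0 ^ 2 + B 0 ^ 2)) = D ^ 2 * F 1 ^ 2 := by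
    linear_combination B 0 ^ 2 * hA + A 0 ^ 2 * hB - 2 * A 0 * B 0 * hAB
  have h01 : -(c * l * (A 0 * A 1 + B 0 * B 1)) = D ^ 2 * (F 0 * F 1) := by
    linear_combination -(B 0 * B 1) * hA - A 0 * A 1 * hB + (A 0 * B 1 + A 1 * B 0) * hAB
  have hl : l ≠ 0 := by
    intro hl
    rw [hl] at h00 h11 h01
    have : (c * D ^ 2) ^ 2 = 0 := by
      linear_combination c * D ^ 2 * h00 + D ^ 2 * F 0 ^ 2 * h11 - D ^ 2 * (F 0 * F 1) * h01
    exact mul_ne_zero hc hD (pow_eq_zero_iff two_ne_zero |>.mp this)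
  -- compare the trace and the determinant of that matrix identity
  have hcl : c * l = -D ^ 2 := by
    have htr : c * D ^ 2 + c * l * (A 0 ^ 2 + A 1 ^ 2 + B 0 ^ 2 + B 1 ^ 2) = D ^ 2 * l := by
      linear_combination h00 + h11
    have hdet' :
        c ^ 2 * D ^ 2 * (D ^ 2 + l * (A 0 ^ 2 + A 1 ^ 2 + B 0 ^ 2 + B 1 ^ 2) + l ^ 2) = 0 := by
      linear_combination (c * (D ^ 2 + l * (A 0 ^ 2 + B 0 ^ 2))) * h00 + D ^ 2 * F 0 ^ 2 * h11
        - (-(c * l * (A 0 * A 1 + B 0 * B 1)) + D ^ 2 * (F 0 * F 1)) * h01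
    apply mul_left_cancel₀ (mul_ne_zero (mul_ne_zero (pow_ne_zero 2 hc) hD) hl)
    linear_combination c * hdet' - c ^ 2 * D ^ 2 * htr
  constructor
  · apply mul_left_cancel₀ hD
    linear_combination h11 - h00 + (A 1 ^ 2 + B 1 ^ 2 - A 0 ^ 2 - B 0 ^ 2) * hcl
  · apply mul_left_cancel₀ hD
    linear_combination -h01 - (A 0 * A 1 + B 0 * B 1) * hcl

/-- A two-dimensional free harmonic oscillator with frequency `ω = 1`, initial position
`(x₀, 0)` (with `x₀ > 0`), initial speed `v₀ = x₀` and launch angle `α` with `sin α ≠ 0`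
moves along the elliptical orbit `P_α(t) = (x₀ cos t + x₀ cos α sin t, x₀ sin α sin t)`.
If `F` and `−F` are the foci of this orbit, that is, `dist (P_α t) F + dist (P_α t) (−F) = 2a`
for every `t` and some `a > 0`, then `F = (x, y)` lies on the lemniscate of Bernoulli
`(x² + y²)² = 2x₀²(x² − y²)`. -/
theorem oscillator_foci_on_lemniscate (x₀ α : ℝ) (hx₀ : 0 < x₀) (hsin : Real.sin α ≠ 0)
    (P : ℝ → EuclideanSpace ℝ (Fin 2))
    (hP : ∀ t, P t = pt (x₀ * Real.cos t + x₀ * Real.cos α * Real.sin t)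
                       (x₀ * Real.sin α * Real.sin t))
    (F : EuclideanSpace ℝ (Fin 2)) (a : ℝ) (ha : 0 < a)
    (hfoci : ∀ t, dist (P t) F + dist (P t) (-F) = 2 * a) :
    ((F 0) ^ 2 + (F 1) ^ 2) ^ 2 = 2 * x₀ ^ 2 * ((F 0) ^ 2 - (F 1) ^ 2) := by
  set A := pt x₀ 0
  set B := pt (x₀ * cos α) (x₀ * sin α)
  have hPAB : ∀ t, P t = cos t • A + sin t • B := by
    intro t
    rw [hP]
    ext i
    fin_cases i <;>
      simp only [A, B, pt, Fin.zero_eta, Fin.mk_one, Fin.isValue, Matrix.cons_val_zero,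
        Matrix.cons_val_one, Matrix.cons_val_fin_one, PiLp.add_apply, PiLp.smul_apply,
        smul_eq_mul] <;>
      ring
  obtain ⟨hA, hB, hAB⟩ := inner_relations_of_dist_add_dist_neg_eq fun t ↦ hPAB t ▸ hfoci t
  have hdet : A 0 * B 1 - A 1 * B 0 ≠ 0 := by
    simpa [A, B, pt] using mul_ne_zero (mul_ne_zero hx₀.ne' hx₀.ne') hsin
  obtain ⟨hre, him⟩ := focus_sq_eq_add_sq_of_inner_relations ha.ne' hdet hA hB hAB
  simp only [A, B, pt, PiLp.toLp_apply, Matrix.cons_val_zero, Matrix.cons_val_one] at hre him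
  -- `(x² + y²)² = (x² - y²)² + (2xy)²` for `F = (x, y)`
  linear_combination
    (F 0 ^ 2 - F 1 ^ 2 + (x₀ * cos α) ^ 2 - (x₀ * sin α) ^ 2 - x₀ ^ 2) * hre
    + 4 * (F 0 * F 1 + x₀ * cos α * (x₀ * sin α)) * him
    + x₀ ^ 4 * (cos α ^ 2 + sin α ^ 2 + 1) * sin_sq_add_cos_sq α
end

section
/- Let x₀ > 0 and α ∈ (−π/2, π/2), and let F_α = (x, y) with x = x₀ √(cos α (1 + cos α)) and y = x₀ sin α √(cos α)/√(1 + cos α). Then x² + y² = 2x₀² cos α and x² − y² = 2x₀² cos²α; consequently F_α lies on the lemniscate (x² + y²)² = 2x₀²(x² − y²), and in polar form F_α = (r cos θ, r sin θ) with r² = 2x₀² cos α and polar angle θ = α/2, i.e. F_α = (x₀√(2 cos α) cos(α/2), x₀√(2 cos α) sin(α/2)). -/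
open Real

/-! The focus is `F_α = r (cos (α/2), sin (α/2))` with `r = x₀ √(2 cos α)`: the half-angle
formula `1 + cos α = 2 cos² (α/2)` turns `√(1 + cos α)` into `√2 cos (α/2)`, and
`sin α = 2 sin (α/2) cos (α/2)`. In polar form `x² + y² = r²` and `x² - y² = r² cos α`, and
`r² = 2 x₀² cos α` makes `(x² + y²)² = 2 x₀² (x² - y²)` the polar equation `r² = 2 x₀² cos 2θ`
of the lemniscate at `θ = α/2`. -/

namespace Real

theorem sqrt_one_add_cos {α : ℝ} (hl : -π ≤ α) (hr : α ≤ π) :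
    √(1 + cos α) = √2 * cos (α / 2) := by
  rw [cos_half hl hr, ← sqrt_mul zero_le_two, mul_div_cancel₀ _ two_ne_zero]

theorem sqrt_cos_mul_one_add_cos {α : ℝ} (hc : 0 ≤ cos α) (hl : -π ≤ α) (hr : α ≤ π) :
    √(cos α * (1 + cos α)) = √(2 * cos α) * cos (α / 2) := by
  rw [sqrt_mul hc, sqrt_one_add_cos hl hr, sqrt_mul zero_le_two]
  ring

theorem sin_mul_sqrt_cos_div_sqrt_one_add_cos {α : ℝ} (hl : -π < α) (hr : α < π) :
    sin α * √(cos α) / √(1 + cos α) = √(2 * cos α) * sin (α / 2) := by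
  have hhalf : 0 < cos (α / 2) := cos_pos_of_mem_Ioo ⟨by linarith, by linarith⟩
  have hsin : sin α = 2 * sin (α / 2) * cos (α / 2) := by
    rw [← sin_two_mul, mul_div_cancel₀ _ two_ne_zero]
  rw [div_eq_iff (by rw [sqrt_one_add_cos hl.le hr.le]; positivity), hsin,
    sqrt_one_add_cos hl.le hr.le, sqrt_mul zero_le_two]
  linear_combination
    (-sin (α / 2) * cos (α / 2) * √(cos α)) * mul_self_sqrt (zero_le_two : (0 : ℝ) ≤ 2)

theorem mul_cos_sq_add_mul_sin_sq (r θ : ℝ) : (r * cos θ) ^ 2 + (r * sin θ) ^ 2 = r ^ 2 := by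
  linear_combination r ^ 2 * cos_sq_add_sin_sq θ

theorem mul_cos_sq_sub_mul_sin_sq (r θ : ℝ) :
    (r * cos θ) ^ 2 - (r * sin θ) ^ 2 = r ^ 2 * cos (2 * θ) := by
  rw [cos_two_mul']
  ring

end Real

theorem oscillator_focus_on_lemniscate_general (x₀ α x y : ℝ)
    (hα : α ∈ Set.Ioo (-(π / 2)) (π / 2))
    (hx : x = x₀ * Real.sqrt (Real.cos α * (1 + Real.cos α)))
    (hy : y = x₀ * Real.sin α * Real.sqrt (Real.cos α) / Real.sqrt (1 + Real.cos α)) :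
    x ^ 2 + y ^ 2 = 2 * x₀ ^ 2 * Real.cos α ∧
    x ^ 2 - y ^ 2 = 2 * x₀ ^ 2 * Real.cos α ^ 2 ∧
    (x ^ 2 + y ^ 2) ^ 2 = 2 * x₀ ^ 2 * (x ^ 2 - y ^ 2) ∧
    x = x₀ * Real.sqrt (2 * Real.cos α) * Real.cos (α / 2) ∧
    y = x₀ * Real.sqrt (2 * Real.cos α) * Real.sin (α / 2) := by
  obtain ⟨hl, hr⟩ := hα
  have hc : 0 ≤ cos α := (cos_pos_of_mem_Ioo ⟨hl, hr⟩).le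
  have hl' : -π < α := by linarith [pi_pos]
  have hr' : α < π := by linarith [pi_pos]
  have hx' : x = x₀ * √(2 * cos α) * cos (α / 2) := by
    rw [hx, sqrt_cos_mul_one_add_cos hc hl'.le hr'.le, mul_assoc]
  have hy' : y = x₀ * √(2 * cos α) * sin (α / 2) := by
    rw [hy, mul_assoc x₀, mul_div_assoc, sin_mul_sqrt_cos_div_sqrt_one_add_cos hl' hr',
      mul_assoc]
  have hr2 : (x₀ * √(2 * cos α)) ^ 2 = 2 * x₀ ^ 2 * cos α := by
    rw [mul_pow, sq_sqrt (by positivity)]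
    ring
  have hsum : x ^ 2 + y ^ 2 = 2 * x₀ ^ 2 * cos α := by
    rw [hx', hy', mul_cos_sq_add_mul_sin_sq, hr2]
  have hdiff : x ^ 2 - y ^ 2 = 2 * x₀ ^ 2 * cos α ^ 2 := by
    rw [hx', hy', mul_cos_sq_sub_mul_sin_sq, mul_div_cancel₀ _ two_ne_zero, hr2]
    ring
  exact ⟨hsum, hdiff, by rw [hsum, hdiff]; ring, hx', hy'⟩

/-- Let `x₀ > 0` and `α ∈ (−π/2, π/2)`, and let `F_α = (x, y)` with
`x = x₀ √(cos α (1 + cos α))` and `y = x₀ sin α √(cos α)/√(1 + cos α)` (the focus of the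
elliptical orbit of the oscillator with `v₀ = x₀` lying in the right half-plane).  Then
`x² + y² = 2x₀² cos α` and `x² − y² = 2x₀² cos² α`; consequently `F_α` lies on the lemniscate
`(x² + y²)² = 2x₀²(x² − y²)`, and in polar form `r² = 2x₀² cos α` with polar angle `θ = α/2`,
i.e. `F_α = (x₀ √(2 cos α) cos (α/2), x₀ √(2 cos α) sin (α/2))`. -/
theorem oscillator_focus_on_lemniscate (x₀ α x y : ℝ) (hx₀ : 0 < x₀)
    (hα : α ∈ Set.Ioo (-(π / 2)) (π / 2))
    (hx : x = x₀ * Real.sqrt (Real.cos α * (1 + Real.cos α)))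
    (hy : y = x₀ * Real.sin α * Real.sqrt (Real.cos α) / Real.sqrt (1 + Real.cos α)) :
    x ^ 2 + y ^ 2 = 2 * x₀ ^ 2 * Real.cos α ∧
    x ^ 2 - y ^ 2 = 2 * x₀ ^ 2 * Real.cos α ^ 2 ∧
    (x ^ 2 + y ^ 2) ^ 2 = 2 * x₀ ^ 2 * (x ^ 2 - y ^ 2) ∧
    x = x₀ * Real.sqrt (2 * Real.cos α) * Real.cos (α / 2) ∧
    y = x₀ * Real.sqrt (2 * Real.cos α) * Real.sin (α / 2) :=
  oscillator_focus_on_lemniscate_general x₀ α x y hα hx hy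
end
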